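/- Let x, y, z ∈ ℝ^n have nonzero variance, and let ρ denote the sample Pearson correlation. If ρ(x, y) = cos α and ρ(y, z) = cos β with α, β ∈ [0, π], then cos(α + β) ≤ ρ(x, z) ≤ cos(α − β). -/

import Mathlib

noncomputable def mean {n : ℕ} (x : Fin n → ℝ) : ℝ := (∑ i, x i) / n

noncomputable def std {n : ℕ} (x : Fin n → ℝ) : ℝ :=
  Real.sqrt ((∑ i, (x i - mean x) ^ 2) / n)

noncomputable def pearson {n : ℕ} (x y : Fin n → ℝ) : ℝ :=
  ((∑ i, (x i - mean x) * (y i - mean y)) / n) / (std x * std y)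

/-!
The sample correlation `ρ(x, y)` is the cosine of the angle between the centered vectors
`x - μ_x` and `y - μ_y` in Euclidean space. So with `θ` the angle for `(x, z)`, we get
`α = angle(x, y)` and `β = angle(y, z)`, and the triangle inequality for angles gives
`|α - β| ≤ θ ≤ α + β`; applied with `y` replaced by `-y` it also gives `θ ≤ 2π - (α + β)`.
Since `cos` is decreasing on `[0, π]`, both bounds follow.
-/

open InnerProductGeometry Real
open scoped RealInnerProductSpace

section AngleTriangle

variable {V : Type*} [NormedAddCommGroup V] [InnerProductSpace ℝ V]

theorem cos_angle_le_cos_angle_sub_angle (u v w : V) :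
    cos (angle u w) ≤ cos (angle u v - angle v w) := by
  have huv := angle_le_angle_add_angle u w v
  have hvw := angle_le_angle_add_angle v u w
  rw [← cos_abs (angle u v - angle v w)]
  refine cos_le_cos_of_nonneg_of_le_pi (abs_nonneg _) (angle_le_pi u w)
    (abs_sub_le_iff.2 ⟨?_, ?_⟩)
  · linarith [angle_comm w v]
  · linarith [angle_comm v u]

theorem cos_angle_add_angle_le_cos_angle (u v w : V) :
    cos (angle u v + angle v w) ≤ cos (angle u w) := by
  rcases le_total (angle u v + angle v w) π with hle | hge
  · exact cos_le_cos_of_nonneg_of_le_pi (angle_nonneg u w) hle (angle_le_angle_add_angle u v w)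
  · -- replacing `v` by `-v` turns both angles into their supplements
    have h := angle_le_angle_add_angle u (-v) w
    rw [angle_neg_right, angle_neg_left] at h
    calc cos (angle u v + angle v w) = cos (π - angle u v + (π - angle v w)) := by
          rw [← cos_two_pi_sub]; ring_nf
      _ ≤ cos (angle u w) := cos_le_cos_of_nonneg_of_le_pi (angle_nonneg u w) (by linarith) h

end AngleTriangle

noncomputable def centered {n : ℕ} (x : Fin n → ℝ) : EuclideanSpace ℝ (Fin n) :=
  WithLp.toLp 2 fun i => x i - mean x

theorem std_eq_norm_centered_div_sqrt {n : ℕ} (x : Fin n → ℝ) :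
    std x = ‖centered x‖ / √n := by
  rw [std, EuclideanSpace.norm_eq, sqrt_div' _ n.cast_nonneg]
  simp [centered]

theorem inner_centered {n : ℕ} (x y : Fin n → ℝ) :
    ⟪centered x, centered y⟫ = ∑ i, (x i - mean x) * (y i - mean y) := by
  simp [centered, PiLp.inner_apply, mul_comm]

-- If a centered vector vanishes, both sides are `0`: `pearson` divides by `0`, `angle` is `π / 2`.
theorem pearson_eq_cos_angle_centered {n : ℕ} (x y : Fin n → ℝ) :
    pearson x y = cos (angle (centered x) (centered y)) := by
  rw [cos_angle, pearson, inner_centered, std_eq_norm_centered_div_sqrt,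
    std_eq_norm_centered_div_sqrt, div_mul_div_comm, mul_self_sqrt n.cast_nonneg]
  rcases n.eq_zero_or_pos with rfl | hn
  · simp
  · exact div_div_div_cancel_right₀ (by positivity) _ _

theorem stmt_4_general {n : ℕ} (x y z : Fin n → ℝ)
    (α β : ℝ) (hα : α ∈ Set.Icc 0 Real.pi) (hβ : β ∈ Set.Icc 0 Real.pi)
    (hxy : pearson x y = Real.cos α) (hyz : pearson y z = Real.cos β) :
    Real.cos (α + β) ≤ pearson x z ∧ pearson x z ≤ Real.cos (α - β) := by
  rw [pearson_eq_cos_angle_centered] at hxy hyz ⊢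
  obtain rfl : angle (centered x) (centered y) = α :=
    injOn_cos ⟨angle_nonneg _ _, angle_le_pi _ _⟩ hα hxy
  obtain rfl : angle (centered y) (centered z) = β :=
    injOn_cos ⟨angle_nonneg _ _, angle_le_pi _ _⟩ hβ hyz
  exact ⟨cos_angle_add_angle_le_cos_angle _ _ _, cos_angle_le_cos_angle_sub_angle _ _ _⟩

theorem stmt_4 {n : ℕ} (x y z : Fin n → ℝ)
    (hx : 0 < std x) (hy : 0 < std y) (hz : 0 < std z)
    (α β : ℝ) (hα : α ∈ Set.Icc 0 Real.pi) (hβ : β ∈ Set.Icc 0 Real.pi)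
    (hxy : pearson x y = Real.cos α) (hyz : pearson y z = Real.cos β) :
    Real.cos (α + β) ≤ pearson x z ∧ pearson x z ≤ Real.cos (α - β) :=
  stmt_4_general x y z α β hα hβ hxy hyz
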